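/- Let φ = C₁ ∧ … ∧ C_m be a monotone 3-CNF formula, let Z_φ and Z'_φ be the zones constructed from it, and let M_φ = 14(m+2). Then φ is satisfiable if and only if (Z_φ, ∅) does not entail (Z'_φ, ∅) with respect to ⊨_{M_φ}, i.e., if and only if there exists a configuration γ' satisfying (Z'_φ, ∅) such that for every configuration γ satisfying (Z_φ, ∅) and every subset γ'' ⊆ γ', γ is not region equivalent (≃_{M_φ}) to γ''. -/

import Mathlib

/-!
A satisfying assignment `α` is encoded as an integer configuration of `(Z'_φ, ∅)`, each `y` lying
2 above its `x` exactly when its literal is true. Region equivalence with integers below `M_φ`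
forces equality, and the constraints of `Z_φ` then pin the positive pairs to the three false
literals of one block `≤ k` and the negative pairs to the three true literals of one block `> k`
at most `m` blocks further; one of these two blocks is a genuine clause, falsified by `α`.

Conversely, read `α` off `γ'` (a variable is true iff one of its occurrences has `y - x > 1`).
A clause falsified by `α` lets the variables of `Z_φ` be placed on its literals and on the opposite
dummy clause, which yields a sub-configuration of `γ'` satisfying `(Z_φ, ∅)` and trivially region
equivalent to itself.
-/

open scoped Classical NNReal

namespace ATAPaper

/-! ## Intervals with natural endpoints (possibly unbounded) -/

inductive NInterval where
  | cc (a b : ℕ)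
  | co (a b : ℕ)
  | oc (a b : ℕ)
  | oo (a b : ℕ)
  | ci (a : ℕ)
  | oi (a : ℕ)
deriving DecidableEq

/-- Membership of a nonnegative real in an interval. -/
def NInterval.mem (v : ℝ≥0) : NInterval → Prop
  | .cc a b => (a : ℝ≥0) ≤ v ∧ v ≤ (b : ℝ≥0)
  | .co a b => (a : ℝ≥0) ≤ v ∧ v < (b : ℝ≥0)
  | .oc a b => (a : ℝ≥0) < v ∧ v ≤ (b : ℝ≥0)
  | .oo a b => (a : ℝ≥0) < v ∧ v < (b : ℝ≥0)
  | .ci a => (a : ℝ≥0) ≤ v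
  | .oi a => (a : ℝ≥0) < v

/-- The largest constant appearing in an interval. -/
def NInterval.bound : NInterval → ℕ
  | .cc a b | .co a b | .oc a b | .oo a b => max a b
  | .ci a | .oi a => a

/-! ## Transition formulas `Φ(Q)` with reset `x.φ` and deactivation `x̄.φ` -/

inductive TF (Q : Type*) where
  | tt
  | ff
  | loc (q : Q)
  | guard (I : NInterval)
  | and (φ ψ : TF Q)
  | or (φ ψ : TF Q)
  | reset (φ : TF Q)
  | deact (φ : TF Q)

/-- A state of a 1-ATA is a location together with a clock value which is
either inactive (`none` = ⊥) or a nonnegative real.  A configuration is a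
finite set of states. -/
abbrev Config (Q : Type*) := Finset (Q × Option ℝ≥0)

section BasicDefs

variable {Q A : Type*}

/-- `M ⊨_v φ`. -/
def TF.sat (M : Config Q) : TF Q → Option ℝ≥0 → Prop
  | .tt, _ => True
  | .ff, _ => False
  | .loc q, v => (q, v) ∈ M
  | .guard I, v => v = none ∨ ∃ r, v = some r ∧ I.mem r
  | .and φ ψ, v => φ.sat M v ∧ ψ.sat M v
  | .or φ ψ, v => φ.sat M v ∨ ψ.sat M v
  | .reset φ, _ => φ.sat M (some 0)
  | .deact φ, _ => φ.sat M none

/-- `M` is a minimal model of `φ` on `v`. -/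
def MinModel (M : Config Q) (v : Option ℝ≥0) (φ : TF Q) : Prop :=
  φ.sat M v ∧ ∀ M' ⊂ M, ¬ φ.sat M' v

/-- The disjuncts of a formula (assumed to be in disjunctive normal form). -/
def TF.disjuncts : TF Q → List (TF Q)
  | .or φ ψ => φ.disjuncts ++ ψ.disjuncts
  | φ => [φ]

/-- The intervals occurring (anywhere) in a transition formula. -/
def TF.guards : TF Q → List NInterval
  | .guard I => [I]
  | .and φ ψ | .or φ ψ => φ.guards ++ ψ.guards
  | .reset φ | .deact φ => φ.guards
  | _ => []

/-! ## One-clock alternating timed automata with deactivation -/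

structure OneATA (Q A : Type*) where
  init : Q
  final : Set Q
  delta : Q → A → Option (TF Q)

/-- `C` is one of the disjuncts of `δ(q,a)`. -/
def OneATA.isTarget (𝒜 : OneATA Q A) (q : Q) (a : A) (C : TF Q) : Prop :=
  ∃ φ, 𝒜.delta q a = some φ ∧ C ∈ φ.disjuncts

/-- Time elapse on a configuration: add `d` to every active value, keep `⊥`. -/
noncomputable def Config.delay (γ : Config Q) (d : ℝ≥0) : Config Q :=
  γ.image (fun s => (s.1, s.2.map (· + d)))

/-- Discrete transition `γ →^{a,C} γ'` where the target `χ` assigns to each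
state of `γ` a disjunct of the corresponding transition formula. -/
def OneATA.DStep (𝒜 : OneATA Q A) (γ : Config Q) (a : A)
    (χ : Q × Option ℝ≥0 → TF Q) (γ' : Config Q) : Prop :=
  (∀ s ∈ γ, 𝒜.isTarget s.1 a (χ s)) ∧
  ∃ Mo : Q × Option ℝ≥0 → Config Q,
    (∀ s ∈ γ, MinModel (Mo s) s.2 (χ s)) ∧ γ' = γ.biUnion Mo

/-- Combined transition `γ →^{d,a,C} γ'`. -/
def OneATA.Step (𝒜 : OneATA Q A) (γ : Config Q) (d : ℝ≥0) (a : A)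
    (χ : Q × Option ℝ≥0 → TF Q) (γ' : Config Q) : Prop :=
  𝒜.DStep (γ.delay d) a χ γ'

/-- A configuration is accepting if all its locations are accepting. -/
def OneATA.AcceptingCfg (𝒜 : OneATA Q A) (γ : Config Q) : Prop :=
  ∀ s ∈ γ, s.1 ∈ 𝒜.final

/-- Accepting runs on (finite) timed words. -/
inductive OneATA.AccRun (𝒜 : OneATA Q A) : Config Q → List (ℝ≥0 × A) → Prop
  | nil {γ} : 𝒜.AcceptingCfg γ → 𝒜.AccRun γ []
  | cons {γ γ' : Config Q} {d : ℝ≥0} {a : A} {w : List (ℝ≥0 × A)}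
      (χ : Q × Option ℝ≥0 → TF Q) :
      𝒜.Step γ d a χ γ' → 𝒜.AccRun γ' w → 𝒜.AccRun γ ((d, a) :: w)

/-- The language of a 1-ATA. -/
def OneATA.Lang (𝒜 : OneATA Q A) : Set (List (ℝ≥0 × A)) :=
  {w | 𝒜.AccRun {(𝒜.init, some 0)} w}

/-- Reachability between configurations by timed and discrete transitions. -/
inductive OneATA.Reach (𝒜 : OneATA Q A) : Config Q → Config Q → Prop
  | refl (γ) : 𝒜.Reach γ γ
  | delay {γ γ'} (d : ℝ≥0) : 𝒜.Reach γ γ' → 𝒜.Reach γ (γ'.delay d)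
  | step {γ γ' γ''} (a : A) (χ) : 𝒜.Reach γ γ' → 𝒜.DStep γ' a χ γ'' → 𝒜.Reach γ γ''

/-- The width of a configuration: the number of active states. -/
noncomputable def Config.width (γ : Config Q) : ℕ :=
  (γ.filter (fun s => s.2 ≠ none)).card

/-- The 1-ATA has width at most `k`. -/
def OneATA.WidthBounded (𝒜 : OneATA Q A) (k : ℕ) : Prop :=
  ∀ γ, 𝒜.Reach {(𝒜.init, some 0)} γ → γ.width ≤ k

/-- All constants appearing in the automaton are at most `M`. -/
def OneATA.BoundedBy (𝒜 : OneATA Q A) (M : ℕ) : Prop :=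
  ∀ q a φ, 𝒜.delta q a = some φ → ∀ I ∈ φ.guards, I.bound ≤ M

/-! ## Region equivalence and entailment on configurations -/

/-- `γ ≃_M γ'` via the bijection `h`. -/
def RegionEquivWith (M : ℕ) (γ γ' : Config Q)
    (h : Q × Option ℝ≥0 → Q × Option ℝ≥0) : Prop :=
  Set.BijOn h ↑γ ↑γ' ∧
  (∀ s ∈ γ, (h s).1 = s.1) ∧
  (∀ s ∈ γ, ((h s).2 = none ↔ s.2 = none)) ∧
  (∀ s ∈ γ, ∀ r r', s.2 = some r → (h s).2 = some r' →
    ((r ≤ (M : ℝ≥0)) ↔ (r' ≤ (M : ℝ≥0))) ∧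
    (r ≤ (M : ℝ≥0) →
      (⌊(r : ℝ)⌋ = ⌊(r' : ℝ)⌋ ∧ (Int.fract (r : ℝ) = 0 ↔ Int.fract (r' : ℝ) = 0)))) ∧
  (∀ s₁ ∈ γ, ∀ s₂ ∈ γ, ∀ r₁ r₂ r₁' r₂',
    s₁.2 = some r₁ → s₂.2 = some r₂ → (h s₁).2 = some r₁' → (h s₂).2 = some r₂' →
    r₁ ≤ (M : ℝ≥0) → r₂ ≤ (M : ℝ≥0) →
    (Int.fract (r₁ : ℝ) ≤ Int.fract (r₂ : ℝ) ↔ Int.fract (r₁' : ℝ) ≤ Int.fract (r₂' : ℝ)))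

/-- Region equivalence `γ ≃_M γ'`. -/
def RegionEquiv (M : ℕ) (γ γ' : Config Q) : Prop := ∃ h, RegionEquivWith M γ γ' h

/-- Configuration entailment `γ ⊨_M γ'` : some subset of `γ'` is region equivalent
to `γ`. -/
def CfgEntails (M : ℕ) (γ γ' : Config Q) : Prop :=
  ∃ γ'' ⊆ γ', RegionEquiv M γ γ''

end BasicDefs


/-! ## MTL (negation normal form) -/

inductive MTL (A : Type*) where
  | atom (a : A)
  | natom (a : A)
  | conj (φ ψ : MTL A)
  | disj (φ ψ : MTL A)
  | next (I : NInterval) (φ : MTL A)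
  | untl (I : NInterval) (φ ψ : MTL A)

section MTLDefs

variable {A : Type*}

/-- Accumulated time `Σ_{c=1}^{p} d_c` of the first `p` letters of a timed word. -/
def twtime (w : List (ℝ≥0 × A)) (p : ℕ) : ℝ≥0 := ((w.take p).map Prod.fst).sum

/-- `(w, i) ⊨ φ` (positions are 0-based). -/
def MTL.holdsAt (w : List (ℝ≥0 × A)) : MTL A → ℕ → Prop
  | .atom a, i => ∃ h : i < w.length, (w.get ⟨i, h⟩).2 = a
  | .natom a, i => ∃ h : i < w.length, (w.get ⟨i, h⟩).2 ≠ a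
  | .conj φ ψ, i => φ.holdsAt w i ∧ ψ.holdsAt w i
  | .disj φ ψ, i => φ.holdsAt w i ∨ ψ.holdsAt w i
  | .next I φ, i => ∃ h : i + 1 < w.length, φ.holdsAt w (i + 1) ∧ I.mem (w.get ⟨i + 1, h⟩).1
  | .untl I φ ψ, i => ∃ k, i ≤ k ∧ k < w.length ∧ ψ.holdsAt w k ∧
      I.mem (twtime w (k + 1) - twtime w (i + 1)) ∧
      ∀ j, i ≤ j → j < k → φ.holdsAt w j

/-- The language of an MTL formula (`w ⊨ φ` iff `φ` holds at the first position). -/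
def MTL.Lang (φ : MTL A) : Set (List (ℝ≥0 × A)) := {w | φ.holdsAt w 0}

/-- Pure LTL formulas: every interval is `[0, ∞)`. -/
def MTL.isPure : MTL A → Bool
  | .atom _ | .natom _ => true
  | .conj φ ψ | .disj φ ψ => φ.isPure && ψ.isPure
  | .next I φ => decide (I = NInterval.ci 0) && φ.isPure
  | .untl I φ ψ => decide (I = NInterval.ci 0) && φ.isPure && ψ.isPure

/-- The subformulas of an MTL formula. -/
def MTL.subfs : MTL A → List (MTL A)
  | .atom a => [.atom a]
  | .natom a => [.natom a]
  | .conj φ ψ => .conj φ ψ :: (φ.subfs ++ ψ.subfs)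
  | .disj φ ψ => .disj φ ψ :: (φ.subfs ++ ψ.subfs)
  | .next I φ => .next I φ :: φ.subfs
  | .untl I φ ψ => .untl I φ ψ :: (φ.subfs ++ ψ.subfs)

/-- One-sided MTL: in every Until, the left argument is a pure LTL formula. -/
def MTL.oneSided : MTL A → Prop
  | .atom _ | .natom _ => True
  | .conj φ ψ | .disj φ ψ => φ.oneSided ∧ ψ.oneSided
  | .next _ φ => φ.oneSided
  | .untl _ φ ψ => φ.isPure = true ∧ ψ.oneSided

/-! ## The MTL-to-1-ATA construction with deactivation -/

/-- Locations of the constructed automaton: the initial location `φ_init`,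
locations for formulas (in particular Until subformulas and `φ` itself), and
locations `(X_I ψ)ʳ`. -/
inductive MLoc (A : Type*) where
  | start
  | form (ψ : MTL A)
  | nextr (I : NInterval) (ψ : MTL A)

/-- Prefix `x̄.` if `ψ` is pure LTL, and nothing otherwise. -/
def barP (ψ : MTL A) (φ : TF (MLoc A)) : TF (MLoc A) :=
  if ψ.isPure then .deact φ else φ

/-- Prefix `x̄.` if `ψ` is pure LTL, and `x.` otherwise. -/
def rhoP (ψ : MTL A) (φ : TF (MLoc A)) : TF (MLoc A) :=
  if ψ.isPure then .deact φ else .reset φ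

variable [DecidableEq A]

/-- The transition formula `δ(ψ, a)` for subformulas `ψ`. -/
def dform : MTL A → A → TF (MLoc A)
  | .atom b, a => if b = a then .tt else .ff
  | .natom b, a => if b = a then .ff else .tt
  | .conj φ ψ, a => .and (barP φ (dform φ a)) (barP ψ (dform ψ a))
  | .disj φ ψ, a => .or (barP φ (dform φ a)) (barP ψ (dform ψ a))
  | .next I ψ, _ => .reset (.loc (.nextr I ψ))
  | .untl I φ ψ, a =>
      .or (.and (rhoP ψ (dform ψ a)) (.guard I))
          (.and (rhoP φ (dform φ a)) (.loc (.form (.untl I φ ψ))))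

/-- The transition function of the constructed automaton `A'_φ`. -/
def mlocDelta (φ₀ : MTL A) : MLoc A → A → Option (TF (MLoc A))
  | .start, a => some (rhoP φ₀ (dform φ₀ a))
  | .form ψ, a => some (dform ψ a)
  | .nextr I ψ, a => some (.and (.guard I) (rhoP ψ (dform ψ a)))

/-- The 1-ATA `A'_φ` constructed from an MTL formula `φ`:
initial location `φ_init`, no accepting locations. -/
def ataOf (φ : MTL A) : OneATA (MLoc A) A :=
  { init := .start, final := ∅, delta := mlocDelta φ }

end MTLDefs

section KB
variable {A : Type*}
/-- The recursive width bound `k_ψ`. -/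
def kBound : MTL A → ℕ
  | .atom _ | .natom _ => 1
  | .conj φ ψ => if (MTL.conj φ ψ).isPure then 1 else kBound φ + kBound ψ
  | .disj φ ψ => if (MTL.disj φ ψ).isPure then 1 else max (kBound φ) (kBound ψ)
  | .next I φ => if (MTL.next I φ).isPure then 1 else kBound φ
  | .untl I φ ψ => if (MTL.untl I φ ψ).isPure then 1 else kBound ψ
end KB


/-! ## Zones (variables `x_{q,i}`), nodes and their configuration semantics -/

section ZoneDefs

variable {Q A : Type*}

/-- A (semantic) zone: a finite set of variables `x_{q,i}` together with the
set of valuations satisfying its constraints. -/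
structure SemZone (Q : Type*) where
  vars : Finset (Q × ℕ)
  val : ((Q × ℕ) → ℝ≥0) → Prop

/-- `γ` satisfies the node `(Z, IA)` via the surjection `h`. -/
def NodeSatVia (Z : SemZone Q) (IA : Finset (Q × ℕ)) (γ : Config Q)
    (h : Q × ℕ → Q × Option ℝ≥0) : Prop :=
  (∀ y ∈ Z.vars ∪ IA, (h y).1 = y.1) ∧
  (∀ y ∈ Z.vars ∪ IA, h y ∈ γ) ∧
  (∀ s ∈ γ, ∃ y ∈ Z.vars ∪ IA, h y = s) ∧
  (∀ y ∈ IA, (h y).2 = none) ∧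
  ∃ ν : (Q × ℕ) → ℝ≥0, (∀ y ∈ Z.vars, (h y).2 = some (ν y)) ∧ Z.val ν

/-- `γ ∈ ⟦(Z, IA)⟧`. -/
def NodeSat (Z : SemZone Q) (IA : Finset (Q × ℕ)) (γ : Config Q) : Prop :=
  ∃ h, NodeSatVia Z IA γ h

/-- The special empty node `(Z_∅, {})`, satisfied exactly by the empty
configuration. -/
def emptySemZone {Q : Type*} : SemZone Q := ⟨∅, fun _ => True⟩

/-- The initial node `((x_{q₀,1} = 0), ∅)`. -/
def initSemZone (𝒜 : OneATA Q A) : SemZone Q :=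
  ⟨{(𝒜.init, 1)}, fun ν => ν (𝒜.init, 1) = 0⟩

/-! ### Simple clauses and the successor computation -/

/-- A clause is a conjunction of atoms of the form `true`, `false`, `q`, `I`,
`x.q`, `x̄.q`. -/
def TF.isSimpleConj : TF Q → Bool
  | .tt => true
  | .ff => true
  | .loc _ => true
  | .guard _ => true
  | .reset (.loc _) => true
  | .deact (.loc _) => true
  | .and φ ψ => φ.isSimpleConj && ψ.isSimpleConj
  | _ => false

/-- Every transition formula of the automaton is in disjunctive normal form. -/
def OneATA.normalized (𝒜 : OneATA Q A) : Prop :=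
  ∀ q a φ, 𝒜.delta q a = some φ → ∀ C ∈ φ.disjuncts, C.isSimpleConj = true

/-- The interval atoms of a clause. -/
def TF.topGuards : TF Q → List NInterval
  | .guard I => [I]
  | .and φ ψ => φ.topGuards ++ ψ.topGuards
  | _ => []

/-- The location atoms `q` of a clause. -/
def TF.atomLocs : TF Q → List Q
  | .loc q => [q]
  | .and φ ψ => φ.atomLocs ++ ψ.atomLocs
  | _ => []

/-- The reset atoms `x.q` of a clause. -/
def TF.resetLocs : TF Q → List Q
  | .reset (.loc q) => [q]
  | .and φ ψ => φ.resetLocs ++ ψ.resetLocs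
  | _ => []

/-- The deactivation atoms `x̄.q` of a clause. -/
def TF.deactLocs : TF Q → List Q
  | .deact (.loc q) => [q]
  | .and φ ψ => φ.deactLocs ++ ψ.deactLocs
  | _ => []

/-- The inactive variable set of the successor node: `x'_{q,0}` for every atom
`x̄.q`, and for every atom `q` of a clause of an inactive variable. -/
noncomputable def succIA (Z : SemZone Q) (IA : Finset (Q × ℕ))
    (T : Q × ℕ → TF Q) : Finset (Q × ℕ) :=
  ((Z.vars ∪ IA).biUnion fun y => ((T y).deactLocs.toFinset).image fun q => (q, 0)) ∪
  (IA.biUnion fun y => ((T y).atomLocs.toFinset).image fun q => (q, 0))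

/-- Number of active variables whose clause contains the atom `q`. -/
noncomputable def copyCount (Z : SemZone Q) (T : Q × ℕ → TF Q) (q : Q) : ℕ :=
  (Z.vars.filter fun y => q ∈ (T y).atomLocs).card

/-- The active variable set of the successor node: `x'_{q,1}` for resets, and
fresh variables `x'_{q,ℓ}` with `2 ≤ ℓ` (smallest free indices) for atoms `q`
of clauses of active variables. -/
noncomputable def succVars (Z : SemZone Q) (IA : Finset (Q × ℕ))
    (T : Q × ℕ → TF Q) : Finset (Q × ℕ) :=
  (((Z.vars ∪ IA).biUnion fun y => (T y).resetLocs.toFinset).image fun q => (q, 1)) ∪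
  ((Z.vars.biUnion fun y => (T y).atomLocs.toFinset).biUnion fun q =>
    (Finset.Icc 2 (copyCount Z T q + 1)).image fun i => (q, i))

/-- The successor computation on nodes:  time elapse, guard intersection,
reset/deactivation with fresh variables, and renaming (canonicalization is
semantically transparent).  `T` assigns to every variable of the node a
disjunct of the transition formula of its location on the letter `a`.  If a
chosen disjunct is `false`, the target is discarded; if all chosen disjuncts
are `true`, the successor is the special empty node. -/
def Succ (𝒜 : OneATA Q A) (Z : SemZone Q) (IA : Finset (Q × ℕ)) (a : A)
    (T : Q × ℕ → TF Q) (Z' : SemZone Q) (IA' : Finset (Q × ℕ)) : Prop :=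
  (∀ y ∈ Z.vars ∪ IA, 𝒜.isTarget y.1 a (T y)) ∧
  (∀ y ∈ Z.vars ∪ IA, T y ≠ TF.ff) ∧
  ((∀ y ∈ Z.vars ∪ IA, T y = TF.tt) → (Z' = emptySemZone ∧ IA' = ∅)) ∧
  ((¬ ∀ y ∈ Z.vars ∪ IA, T y = TF.tt) →
    IA' = succIA Z IA T ∧
    Z'.vars = succVars Z IA T ∧
    ∃ g : (Q × ℕ) → Q → ℕ,
      (∀ y ∈ Z.vars, ∀ q ∈ (T y).atomLocs, 2 ≤ g y q ∧ g y q ≤ copyCount Z T q + 1) ∧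
      (∀ y₁ ∈ Z.vars, ∀ y₂ ∈ Z.vars, ∀ q, q ∈ (T y₁).atomLocs → q ∈ (T y₂).atomLocs →
        g y₁ q = g y₂ q → y₁ = y₂) ∧
      Z'.val = fun ν' => ∃ (ν : (Q × ℕ) → ℝ≥0) (d : ℝ≥0), Z.val ν ∧
        (∀ y ∈ Z.vars, ∀ I ∈ (T y).topGuards, I.mem (ν y + d)) ∧
        (∀ y ∈ Z.vars ∪ IA, ∀ q ∈ (T y).resetLocs, ν' (q, 1) = 0) ∧
        (∀ y ∈ Z.vars, ∀ q ∈ (T y).atomLocs, ν' (q, g y q) = ν y + d))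

/-- Time elapse on a single state. -/
noncomputable def stDelay (s : Q × Option ℝ≥0) (d : ℝ≥0) : Q × Option ℝ≥0 :=
  (s.1, s.2.map (· + d))

/-- `γ →^{d,a,(C₁,…,C_m)} γ'` where the disjuncts chosen in the step correspond,
via a surjection witnessing `γ ∈ ⟦(Z,IA)⟧`, to the target tuple `T` of the node. -/
def StepMatching (𝒜 : OneATA Q A) (Z : SemZone Q) (IA : Finset (Q × ℕ))
    (γ : Config Q) (d : ℝ≥0) (a : A) (T : Q × ℕ → TF Q) (γ' : Config Q) : Prop :=
  ∃ h χ, NodeSatVia Z IA γ h ∧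
    (∀ y ∈ Z.vars ∪ IA, χ (stDelay (h y) d) = T y) ∧
    𝒜.Step γ d a χ γ'

/-- Reachability in the zone graph. -/
inductive ZReach (𝒜 : OneATA Q A) :
    SemZone Q × Finset (Q × ℕ) → SemZone Q × Finset (Q × ℕ) → Prop
  | refl (n) : ZReach 𝒜 n n
  | step {n₁ n₂ n₃} (a : A) (T) :
      ZReach 𝒜 n₁ n₂ → Succ 𝒜 n₂.1 n₂.2 a T n₃.1 n₃.2 → ZReach 𝒜 n₁ n₃

/-- A node is accepting if the locations of all its variables are accepting. -/
def AccNode (𝒜 : OneATA Q A) (Z : SemZone Q) (IA : Finset (Q × ℕ)) : Prop :=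
  ∀ y ∈ Z.vars ∪ IA, y.1 ∈ 𝒜.final

/-! ### Entailment between nodes -/

/-- Node entailment `(Z,IA) ⊨_M (Z',IA')`. -/
def NodeEntails (M : ℕ) (Z : SemZone Q) (IA : Finset (Q × ℕ))
    (Z' : SemZone Q) (IA' : Finset (Q × ℕ)) : Prop :=
  ∀ γ', NodeSat Z' IA' γ' → ∃ γ, NodeSat Z IA γ ∧ CfgEntails M γ γ'

/-- Classical region equivalence between valuations over the variable set `V`. -/
def ValRegEquiv (M : ℕ) (V : Finset (Q × ℕ)) (u u' : (Q × ℕ) → ℝ≥0) : Prop :=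
  (∀ y ∈ V, ((u y ≤ (M : ℝ≥0)) ↔ (u' y ≤ (M : ℝ≥0))) ∧
    (u y ≤ (M : ℝ≥0) →
      (⌊(u y : ℝ)⌋ = ⌊(u' y : ℝ)⌋ ∧ (Int.fract (u y : ℝ) = 0 ↔ Int.fract (u' y : ℝ) = 0)))) ∧
  (∀ y ∈ V, ∀ z ∈ V, u y ≤ (M : ℝ≥0) → u z ≤ (M : ℝ≥0) →
    (Int.fract (u y : ℝ) ≤ Int.fract (u z : ℝ) ↔
      Int.fract (u' y : ℝ) ≤ Int.fract (u' z : ℝ)))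

/-- The bounded entailment check `(Z,IA) ⊨ᵇ_M (Z',IA')`, for zones over the same
variables, using the identity correspondence of variables. -/
def BoundedEntails (M : ℕ) (Z : SemZone Q) (IA : Finset (Q × ℕ))
    (Z' : SemZone Q) (IA' : Finset (Q × ℕ)) : Prop :=
  IA ⊆ IA' ∧ ∀ u', Z'.val u' → ∃ u, Z.val u ∧ ValRegEquiv M Z.vars u u'

/-! ### Syntactic zones -/

/-- Comparison relations in zone constraints. -/
inductive ZRel | lt | le | gt | ge

def ZRel.holds : ZRel → ℝ → ℝ → Prop
  | .lt, x, y => x < y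
  | .le, x, y => x ≤ y
  | .gt, x, y => x > y
  | .ge, x, y => x ≥ y

/-- A zone constraint: `y ∼ k` or `y − x ∼ k` with `k ∈ ℤ`. -/
inductive ZConstr (Q : Type*) where
  | single (y : Q × ℕ) (r : ZRel) (k : ℤ)
  | diff (y x : Q × ℕ) (r : ZRel) (k : ℤ)

def ZConstr.holds (ν : (Q × ℕ) → ℝ≥0) : ZConstr Q → Prop
  | .single y r k => r.holds (ν y : ℝ) (k : ℝ)
  | .diff y x r k => r.holds ((ν y : ℝ) - (ν x : ℝ)) (k : ℝ)

/-- The variables occurring in a constraint. -/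
def ZConstr.varsIn : ZConstr Q → List (Q × ℕ)
  | .single y _ _ => [y]
  | .diff y x _ _ => [y, x]

/-- A (syntactic) zone: a finite set of variables and a finite conjunction of
constraints. -/
structure Zone (Q : Type*) where
  vars : Finset (Q × ℕ)
  constrs : List (ZConstr Q)

def Zone.satBy (Z : Zone Q) (ν : (Q × ℕ) → ℝ≥0) : Prop :=
  ∀ c ∈ Z.constrs, c.holds ν

/-- Constraints only mention variables of the zone. -/
def Zone.wf (Z : Zone Q) : Prop :=
  ∀ c ∈ Z.constrs, ∀ v ∈ c.varsIn, v ∈ Z.vars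

/-- The semantic zone of a syntactic zone. -/
def Zone.toSem (Z : Zone Q) : SemZone Q := ⟨Z.vars, Z.satBy⟩

/-! ### The `N'_r` sets for the entailment check -/

/-- Location preserving one-to-one mapping from `Var(Z)` to `Var(Z')`. -/
def LocPresInj (Z Z' : Zone Q) (r : Q × ℕ → Q × ℕ) : Prop :=
  Set.InjOn r ↑Z.vars ∧ (∀ y ∈ Z.vars, r y ∈ Z'.vars) ∧ ∀ y ∈ Z.vars, (r y).1 = y.1

/-- `γ' ∈ N'_r` : `γ'` satisfies `(Z', IA')` via a surjection whose induced
valuation, transported back along `r`, is region equivalent to no valuation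
satisfying `Z`. -/
def InNr (M : ℕ) (Z Z' : Zone Q) (IA' : Finset (Q × ℕ))
    (r : Q × ℕ → Q × ℕ) (γ' : Config Q) : Prop :=
  ∃ (h' : Q × ℕ → Q × Option ℝ≥0) (ν' : (Q × ℕ) → ℝ≥0),
    (∀ y ∈ Z'.vars ∪ IA', (h' y).1 = y.1) ∧
    (∀ y ∈ Z'.vars ∪ IA', h' y ∈ γ') ∧
    (∀ s ∈ γ', ∃ y ∈ Z'.vars ∪ IA', h' y = s) ∧
    (∀ y ∈ IA', (h' y).2 = none) ∧
    (∀ y ∈ Z'.vars, (h' y).2 = some (ν' y)) ∧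
    Z'.satBy ν' ∧
    ∀ ν, Z.satBy ν → ¬ ValRegEquiv M Z.vars ν (fun y => ν' (r y))

end ZoneDefs


/-! ## The zones `Z_φ` and `Z'_φ` constructed from a monotone 3-CNF formula -/

/-- The two locations `q_x` and `q_y`. -/
inductive XY | qx | qy
deriving DecidableEq

/-- The zone variables used in the reduction, for a formula with `m` clauses:
`px_j, py_j, nx_j, ny_j` (dummy clauses), `x^i_j, y^i_j` (clause literals) for
`Z'_φ`, and `x⁺_j, y⁺_j, x⁻_j, y⁻_j` for `Z_φ`. -/
inductive MVar (m : ℕ) where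
  | px (j : Fin 3)
  | py (j : Fin 3)
  | nx (j : Fin 3)
  | ny (j : Fin 3)
  | xc (i : Fin m) (j : Fin 3)
  | yc (i : Fin m) (j : Fin 3)
  | xp (j : Fin 3)
  | yp (j : Fin 3)
  | xm (j : Fin 3)
  | ym (j : Fin 3)
deriving DecidableEq

section Mono

variable {m : ℕ}

/-- The location of each variable. -/
def MVar.loc : MVar m → XY
  | .px _ | .nx _ | .xc _ _ | .xp _ | .xm _ => .qx
  | .py _ | .ny _ | .yc _ _ | .yp _ | .ym _ => .qy

def MVar.inZ : MVar m → Prop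
  | .xp _ | .yp _ | .xm _ | .ym _ => True
  | _ => False

/-- The variables of `Z_φ`. -/
def ZVars (m : ℕ) : Set (MVar m) := {y | y.inZ}

/-- The variables of `Z'_φ`. -/
def Z'Vars (m : ℕ) : Set (MVar m) := {y | ¬ y.inZ}

/-- `γ` satisfies the node `(Z, ∅)` (zone given semantically by the predicate
`P` on valuations, over the variable set `V`) via the surjection `h`. -/
def MSat (V : Set (MVar m)) (P : (MVar m → ℝ≥0) → Prop) (γ : Config XY)
    (h : MVar m → XY × Option ℝ≥0) : Prop :=
  (∀ y ∈ V, (h y).1 = y.loc) ∧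
  (∀ y ∈ V, h y ∈ γ) ∧
  (∀ s ∈ γ, ∃ y ∈ V, h y = s) ∧
  ∃ ν : MVar m → ℝ≥0, (∀ y ∈ V, (h y).2 = some (ν y)) ∧ P ν

/-- The constraints of the zone `Z_φ` (with `k` positive clauses and `m`
clauses in total). -/
def ZphiSat (m k : ℕ) (ν : MVar m → ℝ≥0) : Prop :=
  (∀ j : Fin 3, 0 ≤ (ν (.yp j) : ℝ) - ν (.xp j) ∧ (ν (.yp j) : ℝ) - ν (.xp j) ≤ 1) ∧
  (∀ j : Fin 3, 1 < (ν (.ym j) : ℝ) - ν (.xm j) ∧ (ν (.ym j) : ℝ) - ν (.xm j) ≤ 2) ∧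
  (∀ j : Fin 2, 1 ≤ (ν (.xp j.succ) : ℝ) - ν (.yp j.castSucc) ∧
      (ν (.xp j.succ) : ℝ) - ν (.yp j.castSucc) ≤ 5) ∧
  (∀ j : Fin 2, 1 ≤ (ν (.xm j.succ) : ℝ) - ν (.ym j.castSucc) ∧
      (ν (.xm j.succ) : ℝ) - ν (.ym j.castSucc) ≤ 5) ∧
  ((ν (.yp 2) : ℝ) < 14 * ((k : ℝ) + 1) - 2) ∧
  ((ν (.xm 0) : ℝ) > 14 * ((k : ℝ) + 1) - 2) ∧
  ((ν (.ym 2) : ℝ) - ν (.xp 0) < 14 * ((m : ℝ) + 2) - 6)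

/-- The constraints of the zone `Z'_φ`, for a monotone 3-CNF formula whose
`i`-th clause has literals on the propositional variables `lits i 0`,
`lits i 1`, `lits i 2`. -/
def Z'phiSat (m : ℕ) {PV : Type*} (lits : Fin m → Fin 3 → PV)
    (ν : MVar m → ℝ≥0) : Prop :=
  (∀ j : Fin 3, (ν (.px j) : ℝ) = 3 * (j : ℕ) ∧ (ν (.py j) : ℝ) = 3 * (j : ℕ)) ∧
  (∀ j : Fin 3, (ν (.nx j) : ℝ) = 14 * ((m : ℝ) + 1) + 3 * (j : ℕ) ∧
      (ν (.ny j) : ℝ) = 14 * ((m : ℝ) + 1) + 3 * (j : ℕ) + 2) ∧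
  (∀ (i : Fin m) (j : Fin 3),
      14 * ((i : ℕ) + 1 : ℝ) + 3 * (j : ℕ) ≤ (ν (.xc i j) : ℝ) ∧
      (ν (.xc i j) : ℝ) ≤ 14 * ((i : ℕ) + 1 : ℝ) + 3 * (j : ℕ) + 2 ∧
      14 * ((i : ℕ) + 1 : ℝ) + 3 * (j : ℕ) ≤ (ν (.yc i j) : ℝ) ∧
      (ν (.yc i j) : ℝ) ≤ 14 * ((i : ℕ) + 1 : ℝ) + 3 * (j : ℕ) + 2 ∧
      (ν (.xc i j) : ℝ) ≤ (ν (.yc i j) : ℝ)) ∧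
  (∀ (i i' : Fin m) (j j' : Fin 3), lits i j = lits i' j' →
      (ν (.xc i' j') : ℝ) - ν (.xc i j) = 14 * (((i' : ℕ) : ℝ) - ((i : ℕ) : ℝ)) +
        3 * (((j' : ℕ) : ℝ) - ((j : ℕ) : ℝ)) ∧
      (ν (.yc i' j') : ℝ) - ν (.yc i j) = 14 * (((i' : ℕ) : ℝ) - ((i : ℕ) : ℝ)) +
        3 * (((j' : ℕ) : ℝ) - ((j : ℕ) : ℝ)))

/-- The (real) value of a state of a configuration. -/
noncomputable def sval (s : XY × Option ℝ≥0) : ℝ := ((s.2.getD 0 : ℝ≥0) : ℝ)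

/-- The assignment `α_{γ'}` extracted from a surjection `h'` witnessing that a
configuration satisfies `(Z'_φ, ∅)`: a propositional variable is true iff the
difference `y − x` of (one of) its literal occurrences exceeds 1. -/
def alphaOf {PV : Type*} (lits : Fin m → Fin 3 → PV)
    (h' : MVar m → XY × Option ℝ≥0) (p : PV) : Prop :=
  ∃ (i : Fin m) (j : Fin 3), lits i j = p ∧
    1 < sval (h' (.yc i j)) - sval (h' (.xc i j))

/-- The assignment `α` falsifies clause `C_i` (clauses `C_1, …, C_k` are
positive, the rest negative): all of its literals are false. -/
def Falsifies {PV : Type*} (k : ℕ) (lits : Fin m → Fin 3 → PV)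
    (α : PV → Prop) (i : Fin m) : Prop :=
  if (i : ℕ) < k then ∀ j : Fin 3, ¬ α (lits i j) else ∀ j : Fin 3, α (lits i j)

/-- The monotone 3-CNF formula is satisfiable. -/
def MonoSatisfiable {PV : Type*} (k : ℕ) (lits : Fin m → Fin 3 → PV) : Prop :=
  ∃ α : PV → Prop, ∀ i : Fin m, ¬ Falsifies k lits α i

end Mono

section RegionEquiv

variable {Q : Type*}

theorem regionEquiv_refl (M : ℕ) (γ : Config Q) : RegionEquiv M γ γ := by
  refine ⟨id, Set.bijOn_id _, fun _ _ => rfl, fun _ _ => Iff.rfl, ?_, ?_⟩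
  · intro s _ r r' hr hr'
    obtain rfl : r = r' := Option.some.inj (hr.symm.trans hr')
    exact ⟨Iff.rfl, fun _ => ⟨rfl, Iff.rfl⟩⟩
  · intro s₁ _ s₂ _ r₁ r₂ r₁' r₂' h₁ h₂ h₁' h₂' _ _
    obtain rfl : r₁ = r₁' := Option.some.inj (h₁.symm.trans h₁')
    obtain rfl : r₂ = r₂' := Option.some.inj (h₂.symm.trans h₂')
    exact Iff.rfl

theorem RegionEquivWith.val_eq_natCast {M : ℕ} {γ γ' : Config Q}
    {g : Q × Option ℝ≥0 → Q × Option ℝ≥0} (hg : RegionEquivWith M γ γ' g)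
    {s : Q × Option ℝ≥0} (hs : s ∈ γ) {r : ℝ≥0} (hr : s.2 = some r) {n : ℕ}
    (hn : (g s).2 = some (n : ℝ≥0)) (hnM : n ≤ M) : r = n := by
  obtain ⟨hle, hint⟩ := hg.2.2.2.1 s hs r n hr hn
  obtain ⟨hfloor, hfract⟩ := hint (hle.2 (by exact_mod_cast hnM))
  have hr0 : Int.fract (r : ℝ) = 0 := hfract.2 (by simp)
  rw [← NNReal.coe_inj, ← Int.floor_add_fract (r : ℝ), hr0, hfloor]
  simp

end RegionEquiv

section Reduction

variable {m : ℕ} {PV : Type*} {lits : Fin m → Fin 3 → PV} {α : PV → Prop}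

deriving instance Fintype for MVar

namespace MVar

def block : MVar m → ℕ
  | .px _ | .py _ => 0
  | .nx _ | .ny _ => m + 1
  | .xc i _ | .yc i _ => i + 1
  | .xp _ | .yp _ | .xm _ | .ym _ => 0

def slot : MVar m → ℕ
  | .px j | .py j | .nx j | .ny j | .xc _ j | .yc _ j | .xp j | .yp j | .xm j | .ym j => j

def IsRaised (lits : Fin m → Fin 3 → PV) (α : PV → Prop) : MVar m → Prop
  | .ny _ => True
  | .yc i j => α (lits i j)
  | _ => False

/-- The valuation of `Z'_φ` encoding `α`: clause `i` occupies block `i + 1`, i.e. the values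
`14(i+1)` to `14(i+1) + 8`, and the dummy clauses `px/py` and `nx/ny` the blocks `0` and `m + 1`;
literal `j` sits at offset `3j`, its `y` raised by 2 exactly when it is true. -/
noncomputable def code (lits : Fin m → Fin 3 → PV) (α : PV → Prop) (z : MVar m) : ℕ :=
  14 * z.block + 3 * z.slot + if z.IsRaised lits α then 2 else 0

theorem slot_lt_three (z : MVar m) : z.slot < 3 := by
  cases z <;> simp only [slot, Fin.is_lt]

theorem block_le (z : MVar m) : z.block ≤ m + 1 := by
  cases z <;> simp only [block] <;> omega

theorem loc_eq_qy_of_isRaised {z : MVar m}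
    (hz : z.IsRaised lits α) : z.loc = .qy := by
  cases z <;> first | rfl | exact hz.elim

theorem code_of_loc_eq_qx {z : MVar m}
    (hz : z.loc = .qx) : z.code lits α = 14 * z.block + 3 * z.slot := by
  have : ¬ z.IsRaised lits α := fun h => by simp [loc_eq_qy_of_isRaised h] at hz
  simp [code, this]

theorem code_le (z : MVar m) :
    z.code lits α ≤ 14 * (m + 2) := by
  have := z.slot_lt_three
  have := z.block_le
  unfold code
  split <;> omega

theorem isRaised_iff {z : MVar m}
    (hz : z ∈ Z'Vars m) (hloc : z.loc = .qy) {i : Fin m} {j : Fin 3}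
    (hb : z.block = i + 1) (hs : z.slot = j) : z.IsRaised lits α ↔ α (lits i j) := by
  cases z with
  | yc i' j' =>
    obtain rfl : i' = i := Fin.ext (by simpa [block] using hb)
    obtain rfl : j' = j := Fin.ext hs
    rfl
  | py _ => simp [block] at hb
  | ny _ => simp only [block] at hb; omega
  | px _ | nx _ | xc _ _ => simp [loc] at hloc
  | xp _ | yp _ | xm _ | ym _ => exact absurd trivial hz

theorem code_eq_or (z : MVar m) :
    z.code lits α = 14 * z.block + 3 * z.slot ∨ z.code lits α = 14 * z.block + 3 * z.slot + 2 := by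
  unfold code
  split <;> simp

theorem block_eq_and_slot_eq_of_code_le {x y : MVar m} (hx : x.loc = .qx)
    (h₁ : x.code lits α ≤ y.code lits α) (h₂ : y.code lits α ≤ x.code lits α + 2) :
    y.block = x.block ∧ y.slot = x.slot := by
  have := x.slot_lt_three
  have := y.slot_lt_three
  rw [code_of_loc_eq_qx hx] at h₁ h₂
  rcases y.code_eq_or (lits := lits) (α := α) with h | h <;>
    rcases Nat.lt_trichotomy x.block y.block with hb | hb | hb <;> omega

theorem block_eq_and_slot_lt_of_code_add_one_le {y x : MVar m} (hx : x.loc = .qx)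
    (h₁ : y.code lits α + 1 ≤ x.code lits α) (h₂ : x.code lits α ≤ y.code lits α + 5) :
    x.block = y.block ∧ y.slot < x.slot := by
  have := x.slot_lt_three
  have := y.slot_lt_three
  rw [code_of_loc_eq_qx hx] at h₁ h₂
  rcases y.code_eq_or (lits := lits) (α := α) with h | h <;>
    rcases Nat.lt_trichotomy x.block y.block with hb | hb | hb <;> omega

end MVar

theorem exists_block_of_linked {x y : Fin 3 → MVar m} (hx : ∀ j, (x j).loc = .qx)
    (hxy : ∀ j, ((x j).code lits α : ℝ) ≤ (y j).code lits α ∧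
      ((y j).code lits α : ℝ) ≤ (x j).code lits α + 2)
    (hlink : ∀ j : Fin 2, ((y j.castSucc).code lits α : ℝ) + 1 ≤ (x j.succ).code lits α ∧
      ((x j.succ).code lits α : ℝ) ≤ (y j.castSucc).code lits α + 5) :
    ∃ b : ℕ, ∀ j : Fin 3, (y j).block = b ∧ (y j).slot = j ∧
      (x j).code lits α = 14 * b + 3 * j ∧
      (y j).code lits α = (x j).code lits α + if (y j).IsRaised lits α then 2 else 0 := by
  have hpair (j : Fin 3) := MVar.block_eq_and_slot_eq_of_code_le (hx j)
    (by exact_mod_cast (hxy j).1) (by exact_mod_cast (hxy j).2)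
  have hstep (j : Fin 2) := MVar.block_eq_and_slot_lt_of_code_add_one_le (hx j.succ)
    (by exact_mod_cast (hlink j).1) (by exact_mod_cast (hlink j).2)
  have hcode (j : Fin 3) : (y j).code lits α = (x j).code lits α +
      if (y j).IsRaised lits α then 2 else 0 := by
    rw [MVar.code_of_loc_eq_qx (hx j), MVar.code, (hpair j).1, (hpair j).2]
  refine ⟨(y 0).block, fun j => ?_⟩
  have := (y 2).slot_lt_three
  have h₀ := hpair 0; have h₁ := hpair 1; have h₂ := hpair 2
  have l₀ := hstep 0; have l₁ := hstep 1
  simp only [Fin.castSucc_zero, Fin.succ_zero_eq_one, Fin.castSucc_one, Fin.succ_one_eq_two]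
    at l₀ l₁
  refine ⟨?_, ?_, (MVar.code_of_loc_eq_qx (hx j)).trans ?_, hcode j⟩ <;>
    fin_cases j <;> simp only [Fin.zero_eta, Fin.mk_one, Fin.reduceFinMk, Fin.isValue] <;> omega

theorem exists_falsifies_of_blocks {k : ℕ} (hkm : k ≤ m) {yp ym : Fin 3 → MVar m}
    (hyp : ∀ j, yp j ∈ Z'Vars m ∧ (yp j).loc = .qy) (hym : ∀ j, ym j ∈ Z'Vars m ∧ (ym j).loc = .qy)
    {b c : ℕ} (hb : ∀ j : Fin 3, (yp j).block = b ∧ (yp j).slot = j ∧ ¬ (yp j).IsRaised lits α)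
    (hc : ∀ j : Fin 3, (ym j).block = c ∧ (ym j).slot = j ∧ (ym j).IsRaised lits α)
    (hbk : b ≤ k) (hkc : k < c) (hcb : c ≤ b + m) : ∃ i, Falsifies k lits α i := by
  rcases Nat.eq_zero_or_pos b with rfl | hb₀
  · refine ⟨⟨c - 1, by omega⟩, ?_⟩
    rw [Falsifies, if_neg (by dsimp only; omega)]
    exact fun j => (MVar.isRaised_iff (hym j).1 (hym j).2
      (by rw [(hc j).1]; dsimp only; omega) (hc j).2.1).1 (hc j).2.2
  · refine ⟨⟨b - 1, by omega⟩, ?_⟩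
    rw [Falsifies, if_pos (by dsimp only; omega)]
    exact fun j => mt (MVar.isRaised_iff (hyp j).1 (hyp j).2
      (by rw [(hb j).1]; dsimp only; omega) (hb j).2.1).2 (hb j).2.2

theorem exists_falsifies_of_zphiSat {k : ℕ} (hkm : k ≤ m) {ν : MVar m → ℝ≥0}
    (hcode : ∀ y ∈ ZVars m, ∃ z ∈ Z'Vars m, z.loc = y.loc ∧ ν y = z.code lits α)
    (hZ : ZphiSat m k ν) : ∃ i, Falsifies k lits α i := by
  choose xp hxp using fun j : Fin 3 => hcode (.xp j) trivial
  choose yp hyp using fun j : Fin 3 => hcode (.yp j) trivial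
  choose xm hxm using fun j : Fin 3 => hcode (.xm j) trivial
  choose ym hym using fun j : Fin 3 => hcode (.ym j) trivial
  have hνxp (j : Fin 3) := (hxp j).2.2
  have hνyp (j : Fin 3) := (hyp j).2.2
  have hνxm (j : Fin 3) := (hxm j).2.2
  have hνym (j : Fin 3) := (hym j).2.2
  obtain ⟨c₁, c₂, c₃, c₄, c₅, c₆, c₇⟩ := hZ
  simp only [hνxp, hνyp, hνxm, hνym, NNReal.coe_natCast] at c₁ c₂ c₃ c₄ c₅ c₆ c₇
  obtain ⟨b, hb⟩ := exists_block_of_linked (x := xp) (y := yp) (fun j => (hxp j).2.1)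
    (fun j => ⟨by linarith [c₁ j], by linarith [c₁ j]⟩)
    (fun j => ⟨by linarith [c₃ j], by linarith [c₃ j]⟩)
  obtain ⟨c, hc⟩ := exists_block_of_linked (x := xm) (y := ym) (fun j => (hxm j).2.1)
    (fun j => ⟨by linarith [c₂ j], by linarith [c₂ j]⟩)
    (fun j => ⟨by linarith [c₄ j], by linarith [c₄ j]⟩)
  have hpos (j : Fin 3) : ¬ (yp j).IsRaised lits α := fun hr => by
    have h := c₁ j
    rw [(hb j).2.2.2, if_pos hr] at h
    push_cast at h
    linarith
  have hneg (j : Fin 3) : (ym j).IsRaised lits α := by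
    by_contra hr
    have h := c₂ j
    rw [(hc j).2.2.2, if_neg hr] at h
    push_cast at h
    linarith
  refine exists_falsifies_of_blocks hkm (fun j => ⟨(hyp j).1, (hyp j).2.1⟩)
    (fun j => ⟨(hym j).1, (hym j).2.1⟩) (fun j => ⟨(hb j).1, (hb j).2.1, hpos j⟩)
    (fun j => ⟨(hc j).1, (hc j).2.1, hneg j⟩) ?_ ?_ ?_
  · rw [(hb 2).2.2.2, if_neg (hpos 2), (hb 2).2.2.1] at c₅
    push_cast [Fin.val_two] at c₅
    exact Nat.lt_succ_iff.1 (by exact_mod_cast (by linarith : (b : ℝ) < k + 1))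
  · rw [(hc 0).2.2.1] at c₆
    push_cast [Fin.val_zero] at c₆
    exact_mod_cast (by linarith : (k : ℝ) < c)
  · rw [(hc 2).2.2.2, if_pos (hneg 2), (hc 2).2.2.1, (hb 0).2.2.1] at c₇
    push_cast [Fin.val_zero, Fin.val_two] at c₇
    exact Nat.lt_succ_iff.1 (by exact_mod_cast (by linarith : (c : ℝ) < b + m + 1))

noncomputable def valConfig (V : Set (MVar m)) (ν : MVar m → ℝ≥0) : Config XY :=
  (Finset.univ.filter (· ∈ V)).image fun y => (y.loc, some (ν y))

theorem msat_valConfig {V : Set (MVar m)} {P : (MVar m → ℝ≥0) → Prop} {ν : MVar m → ℝ≥0}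
    (hP : P ν) : MSat V P (valConfig V ν) fun y => (y.loc, some (ν y)) := by
  refine ⟨fun _ _ => rfl, fun y hy => ?_, fun s hs => ?_, ν, fun _ _ => rfl, hP⟩
  · exact Finset.mem_image_of_mem _ (by simpa using hy)
  · obtain ⟨y, hy, rfl⟩ := Finset.mem_image.1 hs
    exact ⟨y, by simpa using hy, rfl⟩

theorem z'phiSat_code (lits : Fin m → Fin 3 → PV) (α : PV → Prop) :
    Z'phiSat m lits fun z => (z.code lits α : ℝ≥0) := by
  refine ⟨fun j => ?_, fun j => ?_, fun i j => ?_, fun i i' j j' hl => ?_⟩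
  · simp [MVar.code, MVar.block, MVar.slot, MVar.IsRaised]
  · simp [MVar.code, MVar.block, MVar.slot, MVar.IsRaised]
  · by_cases h : α (lits i j) <;> simp [MVar.code, MVar.block, MVar.slot, MVar.IsRaised, h]
  · by_cases h : α (lits i j) <;>
      simp only [MVar.code, MVar.block, MVar.slot, MVar.IsRaised, ← hl, h, if_true, if_false] <;>
      push_cast <;> constructor <;> ring

theorem exists_code_eq_of_regionEquiv {γ γ'' : Config XY}
    (hsub : γ'' ⊆ valConfig (Z'Vars m) fun z => (z.code lits α : ℝ≥0))
    {g : XY × Option ℝ≥0 → XY × Option ℝ≥0} (hg : RegionEquivWith (14 * (m + 2)) γ γ'' g)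
    {s : XY × Option ℝ≥0} (hs : s ∈ γ) {r : ℝ≥0} (hr : s.2 = some r) :
    ∃ z ∈ Z'Vars m, z.loc = s.1 ∧ r = z.code lits α := by
  obtain ⟨z, hz, hgs⟩ := Finset.mem_image.1 (hsub (hg.1.mapsTo hs))
  refine ⟨z, by simpa using hz, ?_, hg.val_eq_natCast hs hr ?_ z.code_le⟩
  · rw [← hg.2.1 s hs, ← hgs]
  · rw [← hgs]

theorem exists_subset_msat_comp {V V' : Set (MVar m)} {P P' : (MVar m → ℝ≥0) → Prop}
    {γ' : Config XY} {h' : MVar m → XY × Option ℝ≥0} (hγ' : MSat V' P' γ' h')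
    {ν' : MVar m → ℝ≥0} (hν' : ∀ y ∈ V', (h' y).2 = some (ν' y))
    {σ : MVar m → MVar m} (hσ : ∀ y ∈ V, σ y ∈ V' ∧ (σ y).loc = y.loc)
    (hP : P fun y => ν' (σ y)) : ∃ γ ⊆ γ', ∃ h, MSat V P γ h := by
  refine ⟨γ'.filter fun s => ∃ y ∈ V, h' (σ y) = s, Finset.filter_subset _ _, h' ∘ σ,
    fun y hy => ?_, fun y hy => ?_, fun s hs => (Finset.mem_filter.1 hs).2,
    _, fun y hy => hν' _ (hσ y hy).1, hP⟩
  · rw [Function.comp_apply, hγ'.1 _ (hσ y hy).1, (hσ y hy).2]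
  · exact Finset.mem_filter.2 ⟨hγ'.2.1 _ (hσ y hy).1, y, hy, rfl⟩

section Z'phi

variable {ν' : MVar m → ℝ≥0}

theorem alphaOf_lits_iff {h' : MVar m → XY × Option ℝ≥0}
    (hν' : ∀ y ∈ Z'Vars m, (h' y).2 = some (ν' y)) (hZ' : Z'phiSat m lits ν') (i : Fin m) (j : Fin 3) :
    alphaOf lits h' (lits i j) ↔ 1 < (ν' (.yc i j) : ℝ) - ν' (.xc i j) := by
  have hval (z : MVar m) (hz : z ∈ Z'Vars m) : sval (h' z) = ν' z := by
    simp only [sval, hν' z hz, Option.getD_some]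
  constructor
  · rintro ⟨i', j', hl, hgt⟩
    rw [hval (.yc i' j') id, hval (.xc i' j') id] at hgt
    have hdiff := hZ'.2.2.2 i' i j' j hl
    linarith
  · intro hgt
    exact ⟨i, j, rfl, by rwa [hval (.yc i j) id, hval (.xc i j) id]⟩

def placementPos (i : Fin m) : MVar m → MVar m
  | .xp j => .xc i j
  | .yp j => .yc i j
  | .xm j => .nx j
  | .ym j => .ny j
  | y => y

def placementNeg (i : Fin m) : MVar m → MVar m
  | .xp j => .px j
  | .yp j => .py j
  | .xm j => .xc i j
  | .ym j => .yc i j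
  | y => y

theorem placementPos_mem_and_loc (i : Fin m) (y : MVar m) (hy : y ∈ ZVars m) :
    placementPos i y ∈ Z'Vars m ∧ (placementPos i y).loc = y.loc := by
  cases y <;> first | exact absurd hy id | exact ⟨id, rfl⟩

theorem placementNeg_mem_and_loc (i : Fin m) (y : MVar m) (hy : y ∈ ZVars m) :
    placementNeg i y ∈ Z'Vars m ∧ (placementNeg i y).loc = y.loc := by
  cases y <;> first | exact absurd hy id | exact ⟨id, rfl⟩

theorem Z'phiSat.link (hZ' : Z'phiSat m lits ν') (i : Fin m) (j : Fin 2) :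
    1 ≤ (ν' (.xc i j.succ) : ℝ) - ν' (.yc i j.castSucc) ∧
      (ν' (.xc i j.succ) : ℝ) - ν' (.yc i j.castSucc) ≤ 5 := by
  have hs := hZ'.2.2.1 i j.succ
  have hc := hZ'.2.2.1 i j.castSucc
  simp only [Fin.val_succ, Fin.val_castSucc] at hs hc
  push_cast at hs hc
  constructor <;> linarith

theorem zphiSat_placementPos {k : ℕ} (hkm : k ≤ m) (hZ' : Z'phiSat m lits ν') {i : Fin m}
    (hik : (i : ℕ) < k) (hlow : ∀ j, (ν' (.yc i j) : ℝ) - ν' (.xc i j) ≤ 1) :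
    ZphiSat m k fun y => ν' (placementPos i y) := by
  have hn := hZ'.2.1
  have hc := hZ'.2.2.1 i
  have hikR : (i : ℝ) + 1 ≤ k := by exact_mod_cast hik
  have hkmR : (k : ℝ) ≤ m := by exact_mod_cast hkm
  refine ⟨fun j => ?_, fun j => ?_, hZ'.link i, fun j => ?_, ?_, ?_, ?_⟩ <;>
    dsimp only [placementPos]
  · exact ⟨by linarith [(hc j).2.2.2.2], hlow j⟩
  · constructor <;> linarith [hn j]
  · have hs := hn j.succ
    have hcs := hn j.castSucc
    simp only [Fin.val_succ, Fin.val_castSucc] at hs hcs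
    push_cast at hs hcs
    constructor <;> linarith
  · have hc₂ := (hc 2).2.2.2.1
    push_cast [Fin.val_two] at hc₂
    linarith
  · have hn₀ := (hn 0).1
    push_cast [Fin.val_zero] at hn₀
    linarith
  · have hn₂ := (hn 2).2
    have hc₀ := (hc 0).1
    push_cast [Fin.val_zero, Fin.val_two] at hn₂ hc₀
    linarith

theorem zphiSat_placementNeg {k : ℕ} (hZ' : Z'phiSat m lits ν') {i : Fin m}
    (hki : k ≤ (i : ℕ)) (hhigh : ∀ j, 1 < (ν' (.yc i j) : ℝ) - ν' (.xc i j)) :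
    ZphiSat m k fun y => ν' (placementNeg i y) := by
  have hp := hZ'.1
  have hc := hZ'.2.2.1 i
  have hkiR : (k : ℝ) ≤ i := by exact_mod_cast hki
  have himR : (i : ℝ) + 1 ≤ m := by exact_mod_cast i.is_lt
  refine ⟨fun j => ?_, fun j => ?_, fun j => ?_, hZ'.link i, ?_, ?_, ?_⟩ <;>
    dsimp only [placementNeg]
  · constructor <;> linarith [hp j]
  · exact ⟨hhigh j, by linarith [(hc j).1, (hc j).2.2.2.1]⟩
  · have hs := hp j.succ
    have hcs := hp j.castSucc
    simp only [Fin.val_succ, Fin.val_castSucc] at hs hcs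
    push_cast at hs hcs
    constructor <;> linarith
  · have hp₂ := (hp 2).2
    push_cast [Fin.val_two] at hp₂
    linarith
  · have hc₀ := (hc 0).1
    push_cast [Fin.val_zero] at hc₀
    linarith
  · have hc₂ := (hc 2).2.2.2.1
    have hp₀ := (hp 0).1
    push_cast [Fin.val_zero, Fin.val_two] at hc₂ hp₀
    linarith

theorem exists_placement_of_falsifies {k : ℕ} (hkm : k ≤ m) {h' : MVar m → XY × Option ℝ≥0}
    (hν' : ∀ y ∈ Z'Vars m, (h' y).2 = some (ν' y)) (hZ' : Z'phiSat m lits ν') {i : Fin m}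
    (hi : Falsifies k lits (alphaOf lits h') i) :
    ∃ σ : MVar m → MVar m, (∀ y ∈ ZVars m, σ y ∈ Z'Vars m ∧ (σ y).loc = y.loc) ∧
      ZphiSat m k fun y => ν' (σ y) := by
  unfold Falsifies at hi
  split_ifs at hi with hik
  · refine ⟨placementPos i, placementPos_mem_and_loc i, zphiSat_placementPos hkm hZ' hik fun j => ?_⟩
    exact le_of_not_gt ((alphaOf_lits_iff hν' hZ' i j).not.1 (hi j))
  · exact ⟨placementNeg i, placementNeg_mem_and_loc i, zphiSat_placementNeg hZ' (not_lt.1 hik)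
      fun j => (alphaOf_lits_iff hν' hZ' i j).1 (hi j)⟩

end Z'phi

end Reduction

/-- With `M_φ = 14(m+2)`: the monotone 3-CNF formula `φ` is
satisfiable iff `(Z_φ, ∅)` does not entail `(Z'_φ, ∅)` w.r.t. `⊨_{M_φ}`, i.e.
iff there is a configuration `γ'` satisfying `(Z'_φ, ∅)` such that no
configuration satisfying `(Z_φ, ∅)` is region equivalent to any subset of
`γ'`. -/
theorem statement19 {PV : Type*} (m k : ℕ) (hkm : k ≤ m)
    (lits : Fin m → Fin 3 → PV) :
    MonoSatisfiable k lits ↔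
      ∃ γ', (∃ h', MSat (Z'Vars m) (Z'phiSat m lits) γ' h') ∧
        ∀ γ, (∃ h, MSat (ZVars m) (ZphiSat m k) γ h) →
          ∀ γ'' ⊆ γ', ¬ RegionEquiv (14 * (m + 2)) γ γ'' := by
  constructor
  · rintro ⟨α, hα⟩
    refine ⟨_, ⟨_, msat_valConfig (z'phiSat_code lits α)⟩, ?_⟩
    rintro γ ⟨h, hloc, hmem, -, ν, hν, hZ⟩ γ'' hsub ⟨g, hg⟩
    refine (exists_falsifies_of_zphiSat hkm (fun y hy => ?_) hZ).elim hα
    obtain ⟨z, hz, hzloc, hzν⟩ := exists_code_eq_of_regionEquiv hsub hg (hmem y hy) (hν y hy)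
    exact ⟨z, hz, hzloc.trans (hloc y hy), hzν⟩
  · rintro ⟨γ', ⟨h', hγ'⟩, hno⟩
    obtain ⟨ν', hν', hZ'⟩ := hγ'.2.2.2
    refine ⟨alphaOf lits h', fun i hi => ?_⟩
    obtain ⟨σ, hσ, hZ⟩ := exists_placement_of_falsifies hkm hν' hZ' hi
    obtain ⟨γ, hsub, h, hγ⟩ := exists_subset_msat_comp hγ' hν' hσ hZ
    exact hno γ ⟨h, hγ⟩ γ hsub (regionEquiv_refl _ γ)

end ATAPaper
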